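/- Two continuous maps f, g : ℝ/ℤ → ℝ/ℤ with the same degree are homotopic; moreover the map F(t,x) = t·f̄(x) + (1−t)·ḡ(x) mod 1, where f̄ and ḡ are lifts of f and g, descends to a well-defined continuous homotopy F : [0,1] × ℝ/ℤ → ℝ/ℤ from g to f. -/

import Mathlib

/-!
Write `F(t, x) = g(x) + t·D(x) mod 1` with `D = f̄ - ḡ`. The defect `x ↦ h(x + 1) - h(x)` of a
lift is integer-valued, so the difference of the defects of `f̄` and `ḡ` is continuous and
integer-valued, hence constant, and it vanishes at `0` because the degrees agree. Thus `D` is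
1-periodic and descends to a continuous real function on the circle, which makes `F` well defined
and continuous.
-/

open Function

lemma Continuous.apply_eq_of_forall_exists_intCast {X : Type*} [TopologicalSpace X]
    [PreconnectedSpace X] {a : X → ℝ} (ha : Continuous a) (hint : ∀ x, ∃ n : ℤ, a x = n)
    (x y : X) : a x = a y := by
  choose n hn using hint
  have ha_eq : a = (↑) ∘ n := funext hn
  have hnc : Continuous n := by
    rw [Int.isClosedEmbedding_coe_real.continuous_iff, ← ha_eq]
    exact ha
  rw [ha_eq, comp_apply, comp_apply, PreconnectedSpace.constant inferInstance hnc]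

lemma Function.Periodic.continuous_lift {X : Type*} [TopologicalSpace X] {p : ℝ} {h : ℝ → X}
    (hp : Periodic h p) (hc : Continuous h) : Continuous hp.lift :=
  hc.quotient_liftOn' _

section Lift

variable {p : ℝ}

lemma exists_intCast_eq_sub_of_lift {φ : AddCircle p → AddCircle (1 : ℝ)} {h : ℝ → ℝ}
    (hl : ∀ x : ℝ, (h x : AddCircle (1 : ℝ)) = φ x) (x : ℝ) :
    ∃ n : ℤ, h (x + p) - h x = n := by
  have hzero : ((h (x + p) - h x : ℝ) : AddCircle (1 : ℝ)) = 0 := by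
    rw [AddCircle.coe_sub, hl, hl, AddCircle.coe_add_period, sub_self]
  obtain ⟨n, hn⟩ := (AddCircle.coe_eq_zero_iff 1).mp hzero
  exact ⟨n, by simpa using hn.symm⟩

lemma periodic_sub_of_lift {f g : AddCircle p → AddCircle (1 : ℝ)} {fbar gbar : ℝ → ℝ}
    (hfc : Continuous fbar) (hgc : Continuous gbar)
    (hfl : ∀ x : ℝ, (fbar x : AddCircle (1 : ℝ)) = f x)
    (hgl : ∀ x : ℝ, (gbar x : AddCircle (1 : ℝ)) = g x)
    (hdeg : fbar p - fbar 0 = gbar p - gbar 0) :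
    Periodic (fbar - gbar) p := by
  have hcont : Continuous fun x => (fbar (x + p) - fbar x) - (gbar (x + p) - gbar x) := by
    fun_prop
  have hint : ∀ x, ∃ n : ℤ, (fbar (x + p) - fbar x) - (gbar (x + p) - gbar x) = n := by
    intro x
    obtain ⟨m, hm⟩ := exists_intCast_eq_sub_of_lift hfl x
    obtain ⟨n, hn⟩ := exists_intCast_eq_sub_of_lift hgl x
    exact ⟨m - n, by rw [hm, hn]; push_cast; ring⟩
  intro x
  have hconst := hcont.apply_eq_of_forall_exists_intCast hint x 0
  simp only [zero_add, hdeg, sub_self] at hconst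
  simp only [Pi.sub_apply]
  linarith

end Lift

theorem stmt2_general (f g : AddCircle (1:ℝ) → AddCircle (1:ℝ)) (hg : Continuous g)
    (fbar gbar : ℝ → ℝ) (hfc : Continuous fbar) (hgc : Continuous gbar)
    (hflift : ∀ x : ℝ, ((fbar x : ℝ) : AddCircle (1:ℝ)) = f ((x : ℝ) : AddCircle (1:ℝ)))
    (hglift : ∀ x : ℝ, ((gbar x : ℝ) : AddCircle (1:ℝ)) = g ((x : ℝ) : AddCircle (1:ℝ)))
    (hdeg : fbar 1 - fbar 0 = gbar 1 - gbar 0) :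
    ∃ F : unitInterval × AddCircle (1:ℝ) → AddCircle (1:ℝ),
      Continuous F ∧ (∀ x, F (0, x) = g x) ∧ (∀ x, F (1, x) = f x) ∧
      ∀ (t : unitInterval) (x : ℝ),
        F (t, ((x : ℝ) : AddCircle (1:ℝ))) =
          ((((t : ℝ) * fbar x + (1 - (t : ℝ)) * gbar x : ℝ)) : AddCircle (1:ℝ)) := by
  have hD := periodic_sub_of_lift hfc hgc hflift hglift hdeg
  set F : unitInterval × AddCircle (1:ℝ) → AddCircle (1:ℝ) :=
    fun q => g q.2 + (((q.1 : ℝ) * hD.lift q.2 : ℝ) : AddCircle (1:ℝ))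
  have hF : ∀ (t : unitInterval) (x : ℝ),
      F (t, x) = (((t : ℝ) * fbar x + (1 - (t : ℝ)) * gbar x : ℝ) : AddCircle (1:ℝ)) := by
    intro t x
    simp only [F, Periodic.lift_coe, Pi.sub_apply, ← hglift, ← AddCircle.coe_add]
    ring_nf
  refine ⟨F, ?_, fun x => by simp [F], fun x => ?_, hF⟩
  · have hDc := hD.continuous_lift (hfc.sub hgc)
    fun_prop
  · induction x using QuotientAddGroup.induction_on with
    | H x => simpa [← hflift] using hF 1 x

/-- Two continuous circle maps with the same degree are homotopic, via the homotopy
`F(t,x) = t·f̄(x) + (1-t)·ḡ(x) mod 1`. -/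
theorem stmt2 (f g : AddCircle (1:ℝ) → AddCircle (1:ℝ)) (hf : Continuous f) (hg : Continuous g)
    (fbar gbar : ℝ → ℝ) (hfc : Continuous fbar) (hgc : Continuous gbar)
    (hflift : ∀ x : ℝ, ((fbar x : ℝ) : AddCircle (1:ℝ)) = f ((x : ℝ) : AddCircle (1:ℝ)))
    (hglift : ∀ x : ℝ, ((gbar x : ℝ) : AddCircle (1:ℝ)) = g ((x : ℝ) : AddCircle (1:ℝ)))
    (hdeg : fbar 1 - fbar 0 = gbar 1 - gbar 0) :
    ∃ F : unitInterval × AddCircle (1:ℝ) → AddCircle (1:ℝ),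
      Continuous F ∧ (∀ x, F (0, x) = g x) ∧ (∀ x, F (1, x) = f x) ∧
      ∀ (t : unitInterval) (x : ℝ),
        F (t, ((x : ℝ) : AddCircle (1:ℝ))) =
          ((((t : ℝ) * fbar x + (1 - (t : ℝ)) * gbar x : ℝ)) : AddCircle (1:ℝ)) :=
  stmt2_general f g hg fbar gbar hfc hgc hflift hglift hdeg
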